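/- Trapping boxes in the dicritical case (Lemma 4.2(3)). Let n ∈ ℕ, δ₀ > 0, α < β, and let ξ : ℝ³ → ℝ³ be a continuous vector field in coordinates (θ, z, ρ), 2π-periodic in θ, such that on R = ℝ × [α, β] × [0, δ₀]: ξ_θ ≡ 1, ξ_ρ(θ, z, ρ) = ρⁿ·A_ρ(θ, z, ρ) and ξ_z(θ, z, ρ) = ρ^{n+1}·Ã_z(θ, z, ρ), where A_ρ and Ã_z are continuous and 2π-periodic in θ, A_ρ(θ, z, 0) = a(z) depends only on z, and a(z) < 0 for all z ∈ [α, β]. Then for every ε > 0 with α + ε < β − ε there exists δ ∈ (0, δ₀] with the following property: every integral curve γ(t) = (θ(t), z(t), ρ(t)) of ξ defined on an interval [0, T], with image contained in ℝ × [α, β] × (0, δ₀], z(0) ∈ [α + ε, β − ε] and 0 < ρ(0) ≤ δ, satisfies |z(t) − z(0)| < ε/2 and 0 < ρ(t) ≤ ρ(0) for all t ∈ [0, T]. -/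

import Mathlib

/-! Compactness of `[0, 2π] × [α, β] × {0}` and periodicity in `θ` give `c > 0` with
`A_ρ ≤ -c` for all small `ρ`, so `ρ̇ = ρⁿ A_ρ < 0` whenever `ρ ≤ δ`: the radius can never climb
back to its initial value and decreases along the trajectory. Then
`|ż| = ρⁿ⁺¹ |Ã_z| ≤ M δ ρⁿ ≤ (M δ / c) (-ρ̇)`, so the drift of `z` is bounded by
`(M δ / c) ρ(0) ≤ M δ² / c`, which is `< ε / 2` once `δ` is small. -/

open Real Set Filter Topology Metric

theorem HasDerivAt.snd_fst {E F G : Type*} [NormedAddCommGroup E] [NormedSpace ℝ E]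
    [NormedAddCommGroup F] [NormedSpace ℝ F] [NormedAddCommGroup G] [NormedSpace ℝ G]
    {γ : ℝ → E × F × G} {v : E × F × G} {t : ℝ} (h : HasDerivAt γ v t) :
    HasDerivAt (fun s => (γ s).2.1) v.2.1 t :=
  ((ContinuousLinearMap.fst ℝ F G).comp (ContinuousLinearMap.snd ℝ E (F × G))).hasFDerivAt
    |>.comp_hasDerivAt t h

theorem HasDerivAt.snd_snd {E F G : Type*} [NormedAddCommGroup E] [NormedSpace ℝ E]
    [NormedAddCommGroup F] [NormedSpace ℝ F] [NormedAddCommGroup G] [NormedSpace ℝ G]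
    {γ : ℝ → E × F × G} {v : E × F × G} {t : ℝ} (h : HasDerivAt γ v t) :
    HasDerivAt (fun s => (γ s).2.2) v.2.2 t :=
  ((ContinuousLinearMap.snd ℝ F G).comp (ContinuousLinearMap.snd ℝ E (F × G))).hasFDerivAt
    |>.comp_hasDerivAt t h

theorem IsCompact.exists_forall_thickening_lt_neg {X : Type*} [PseudoMetricSpace X] {K : Set X}
    {f : X → ℝ} (hK : IsCompact K) (hf : Continuous f) (hneg : ∀ x ∈ K, f x < 0) :
    ∃ c > 0, ∃ r > 0, ∀ x ∈ thickening r K, f x < -c := by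
  obtain ⟨c, hc, hle⟩ := hK.exists_forall_le' (a := 0) hf.neg.continuousOn
    fun x hx => neg_pos.mpr (hneg x hx)
  have hKsub : K ⊆ f ⁻¹' Iio (-(c / 2)) := fun x hx => by
    have := hle x hx
    simp only [Pi.neg_apply] at this
    simp only [mem_preimage, mem_Iio]
    linarith
  obtain ⟨r, hr, hsub⟩ := hK.exists_thickening_subset_open (isOpen_Iio.preimage hf) hKsub
  exact ⟨c / 2, half_pos hc, r, hr, fun x hx => hsub hx⟩

section PeriodicFst

variable {Y : Type*} {f : ℝ × Y → ℝ} {p : ℝ}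

theorem exists_mem_Ico_apply_eq_of_periodic_fst (hp : 0 < p)
    (hper : ∀ θ y, f (θ + p, y) = f (θ, y)) (θ : ℝ) (y : Y) :
    ∃ θ' ∈ Ico 0 p, f (θ, y) = f (θ', y) :=
  Function.Periodic.exists_mem_Ico₀ (f := fun θ => f (θ, y)) (fun θ => hper θ y) hp θ

theorem exists_forall_abs_le_of_periodic_fst [TopologicalSpace Y] (hp : 0 < p)
    (hf : Continuous f) (hper : ∀ θ y, f (θ + p, y) = f (θ, y)) {S : Set Y} (hS : IsCompact S) :
    ∃ M, ∀ θ, ∀ y ∈ S, |f (θ, y)| ≤ M := by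
  obtain ⟨M, hM⟩ := (isCompact_Icc.prod hS).exists_bound_of_continuousOn hf.continuousOn
  refine ⟨M, fun θ y hy => ?_⟩
  obtain ⟨θ', hθ', hθθ'⟩ := exists_mem_Ico_apply_eq_of_periodic_fst hp hper θ y
  rw [hθθ', ← Real.norm_eq_abs]
  exact hM _ ⟨Ico_subset_Icc_self hθ', hy⟩

theorem exists_forall_thickening_lt_neg_of_periodic_fst [PseudoMetricSpace Y] (hp : 0 < p)
    (hf : Continuous f) (hper : ∀ θ y, f (θ + p, y) = f (θ, y)) {K : Set Y} (hK : IsCompact K)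
    (hneg : ∀ θ, ∀ y ∈ K, f (θ, y) < 0) :
    ∃ c > 0, ∃ r > 0, ∀ θ, ∀ y ∈ thickening r K, f (θ, y) < -c := by
  obtain ⟨c, hc, r, hr, hlt⟩ := (isCompact_Icc (a := 0) (b := p)).prod hK
    |>.exists_forall_thickening_lt_neg hf fun x hx => hneg x.1 x.2 hx.2
  refine ⟨c, hc, r, hr, fun θ y hy => ?_⟩
  obtain ⟨θ', hθ', hθθ'⟩ := exists_mem_Ico_apply_eq_of_periodic_fst hp hper θ y
  obtain ⟨k, hk, hyk⟩ := mem_thickening_iff.mp hy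
  rw [hθθ']
  refine hlt _ (mem_thickening_iff.mpr ⟨(θ', k), ⟨Ico_subset_Icc_self hθ', hk⟩, ?_⟩)
  simpa [Prod.dist_eq] using hyk

end PeriodicFst

section Fencing

variable {f f' : ℝ → ℝ} {a b : ℝ}

theorem image_le_left_of_deriv_neg_of_eq (hf : ∀ x ∈ Icc a b, HasDerivAt f (f' x) x)
    (hneg : ∀ x ∈ Ico a b, f x = f a → f' x < 0) : ∀ x ∈ Icc a b, f x ≤ f a :=
  image_le_of_deriv_right_lt_deriv_boundary (B' := 0)
    (fun x hx => (hf x hx).continuousAt.continuousWithinAt)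
    (fun x hx => (hf x (Ico_subset_Icc_self hx)).hasDerivWithinAt) le_rfl
    (fun _ => hasDerivAt_const _ (f a)) hneg

theorem abs_image_sub_left_le_of_abs_deriv_le_neg_deriv {g g' : ℝ → ℝ}
    (hf : ∀ x ∈ Icc a b, HasDerivAt f (f' x) x) (hg : ∀ x ∈ Icc a b, HasDerivAt g (g' x) x)
    (bound : ∀ x ∈ Icc a b, |f' x| ≤ -g' x) : ∀ x ∈ Icc a b, |f x - f a| ≤ g a - g x := by
  have hf_sub (x) (hx : x ∈ Icc a b) : HasDerivAt (fun y => f y - f a) (f' x) x :=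
    (hf x hx).sub_const (f a)
  have hg_sub (x) (hx : x ∈ Icc a b) : HasDerivAt (fun y => g a - g y) (-g' x) x :=
    (hg x hx).const_sub (g a)
  intro x hx
  simpa only [Real.norm_eq_abs] using
    image_norm_le_of_norm_deriv_right_le_deriv_boundary' (f := fun y => f y - f a)
      (fun y hy => (hf_sub y hy).continuousAt.continuousWithinAt)
      (fun y hy => (hf_sub y (Ico_subset_Icc_self hy)).hasDerivWithinAt)
      (by simp) (fun y hy => (hg_sub y hy).continuousAt.continuousWithinAt)
      (fun y hy => (hg_sub y (Ico_subset_Icc_self hy)).hasDerivWithinAt)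
      (fun y hy => bound y (Ico_subset_Icc_self hy)) hx

end Fencing

theorem le_left_and_abs_sub_le_of_hasDerivAt_pow_mul {n : ℕ} {ρ z A B : ℝ → ℝ} {T δ c M : ℝ}
    (hc : 0 < c) (hρ : ∀ t ∈ Icc 0 T, HasDerivAt ρ (ρ t ^ n * A t) t)
    (hz : ∀ t ∈ Icc 0 T, HasDerivAt z (ρ t ^ (n + 1) * B t) t)
    (hpos : ∀ t ∈ Icc 0 T, 0 < ρ t) (hA : ∀ t ∈ Icc 0 T, ρ t ≤ δ → A t ≤ -c)
    (hB : ∀ t ∈ Icc 0 T, |B t| ≤ M) (hρ0 : ρ 0 ≤ δ) :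
    ∀ t ∈ Icc 0 T, ρ t ≤ ρ 0 ∧ |z t - z 0| ≤ M * δ ^ 2 / c := by
  have hdec : ∀ t ∈ Icc 0 T, ρ t ≤ ρ 0 :=
    image_le_left_of_deriv_neg_of_eq hρ fun t ht heq =>
      mul_neg_of_pos_of_neg (pow_pos (hpos t (Ico_subset_Icc_self ht)) n)
        ((hA t (Ico_subset_Icc_self ht) (heq ▸ hρ0)).trans_lt (neg_neg_of_pos hc))
  set C := M * δ / c
  have hC (t) (ht : t ∈ Icc 0 T) : 0 ≤ C := by
    have := (abs_nonneg _).trans (hB t ht)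
    have := (hpos t ht).le.trans ((hdec t ht).trans hρ0)
    positivity
  have hdrift : ∀ t ∈ Icc 0 T, |z t - z 0| ≤ C * ρ 0 - C * ρ t := by
    refine abs_image_sub_left_le_of_abs_deriv_le_neg_deriv hz
      (fun t ht => (hρ t ht).const_mul C) fun t ht => ?_
    have hρt := hpos t ht
    have hρδ : ρ t ≤ δ := (hdec t ht).trans hρ0
    have := hC t ht
    calc |ρ t ^ (n + 1) * B t| = ρ t ^ n * (ρ t * |B t|) := by
          rw [abs_mul, abs_of_pos (pow_pos hρt _), pow_succ, mul_assoc]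
      _ ≤ ρ t ^ n * (δ * M) := by gcongr; exacts [hρt.le.trans hρδ, hB t ht]
      _ = C * ρ t ^ n * c := by simp only [C]; field_simp
      _ ≤ C * ρ t ^ n * -A t := by gcongr; linarith [hA t ht hρδ]
      _ = -(C * (ρ t ^ n * A t)) := by ring
  intro t ht
  refine ⟨hdec t ht, (hdrift t ht).trans ?_⟩
  calc C * ρ 0 - C * ρ t ≤ C * δ := by nlinarith [hpos t ht, hC t ht]
    _ = M * δ ^ 2 / c := by ring

theorem exists_pos_le_lt_mul_sq_div_lt {δ₀ r ε : ℝ} (hδ₀ : 0 < δ₀) (hr : 0 < r) (M c : ℝ)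
    (hε : 0 < ε) : ∃ δ, 0 < δ ∧ δ ≤ δ₀ ∧ δ < r ∧ M * δ ^ 2 / c < ε := by
  have hsmall : Tendsto (fun δ : ℝ => M * δ ^ 2 / c) (𝓝[>] 0) (𝓝 0) := by
    simpa using ((continuous_const.mul (continuous_pow 2)).div_const c).continuousWithinAt
      (s := Ioi 0) (x := 0) |>.tendsto
  have hnear (p : ℝ → Prop) (h : ∀ᶠ δ in 𝓝 0, p δ) : ∀ᶠ δ in 𝓝[>] 0, p δ :=
    h.filter_mono nhdsWithin_le_nhds
  exact (eventually_mem_nhdsWithin.and <| (hnear _ (eventually_le_nhds hδ₀)).and <|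
    (hnear _ (eventually_lt_nhds hr)).and (hsmall.eventually (gt_mem_nhds hε))).exists

theorem trapping_boxes_dicritical_general
    (n : ℕ) (δ₀ : ℝ) (hδ₀ : 0 < δ₀) (α β : ℝ)
    (ξ : ℝ × ℝ × ℝ → ℝ × ℝ × ℝ)
    (Aρ Az : ℝ × ℝ × ℝ → ℝ) (hAρ : Continuous Aρ) (hAz : Continuous Az)
    (hAρper : ∀ θ z ρ : ℝ, Aρ (θ + 2 * π, z, ρ) = Aρ (θ, z, ρ))
    (hAzper : ∀ θ z ρ : ℝ, Az (θ + 2 * π, z, ρ) = Az (θ, z, ρ))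
    (a : ℝ → ℝ) (hAρ0 : ∀ θ z : ℝ, Aρ (θ, z, 0) = a z)
    (haneg : ∀ z ∈ Set.Icc α β, a z < 0)
    (hξρ : ∀ θ : ℝ, ∀ z ∈ Set.Icc α β, ∀ ρ ∈ Set.Icc (0 : ℝ) δ₀,
      (ξ (θ, z, ρ)).2.2 = ρ ^ n * Aρ (θ, z, ρ))
    (hξz : ∀ θ : ℝ, ∀ z ∈ Set.Icc α β, ∀ ρ ∈ Set.Icc (0 : ℝ) δ₀,
      (ξ (θ, z, ρ)).2.1 = ρ ^ (n + 1) * Az (θ, z, ρ)) :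
    ∀ ε > 0, α + ε < β - ε →
      ∃ δ, 0 < δ ∧ δ ≤ δ₀ ∧
        ∀ (γ : ℝ → ℝ × ℝ × ℝ) (T : ℝ), 0 ≤ T →
          (∀ t ∈ Set.Icc 0 T, HasDerivAt γ (ξ (γ t)) t) →
          (∀ t ∈ Set.Icc 0 T, (γ t).2.1 ∈ Set.Icc α β ∧ (γ t).2.2 ∈ Set.Ioc 0 δ₀) →
          (γ 0).2.1 ∈ Set.Icc (α + ε) (β - ε) → 0 < (γ 0).2.2 → (γ 0).2.2 ≤ δ →
          ∀ t ∈ Set.Icc 0 T,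
            |(γ t).2.1 - (γ 0).2.1| < ε / 2 ∧ 0 < (γ t).2.2 ∧ (γ t).2.2 ≤ (γ 0).2.2 := by
  intro ε hε _
  obtain ⟨c, hc, r, hr, hAρlt⟩ := exists_forall_thickening_lt_neg_of_periodic_fst two_pi_pos hAρ
    (fun θ y => hAρper θ y.1 y.2) (isCompact_Icc.prod (isCompact_singleton (x := (0 : ℝ))))
    (by rintro θ ⟨z, ρ⟩ ⟨hz, rfl⟩; exact (hAρ0 θ z).symm ▸ haneg z hz)
  obtain ⟨M, hM⟩ := exists_forall_abs_le_of_periodic_fst two_pi_pos hAz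
    (fun θ y => hAzper θ y.1 y.2) (isCompact_Icc.prod (isCompact_Icc (a := 0) (b := δ₀)))
  obtain ⟨δ, hδ, hδδ₀, hδr, hδε⟩ := exists_pos_le_lt_mul_sq_div_lt hδ₀ hr M c (half_pos hε)
  refine ⟨δ, hδ, hδδ₀, fun γ T _ hγ hbox _ _ hρ0 t ht => ?_⟩
  have hρbox (t) (ht : t ∈ Icc 0 T) := Ioc_subset_Icc_self (hbox t ht).2
  have hAρle (t) (ht : t ∈ Icc 0 T) (hρδ : (γ t).2.2 ≤ δ) : Aρ (γ t) ≤ -c := by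
    have hnear : dist (γ t).2 ((γ t).2.1, 0) < r := by
      simpa [Prod.dist_eq, abs_of_pos (hbox t ht).2.1] using ⟨hr, hρδ.trans_lt hδr⟩
    exact (hAρlt _ _ (mem_thickening_iff.mpr ⟨((γ t).2.1, 0), ⟨(hbox t ht).1, rfl⟩, hnear⟩)).le
  have key := le_left_and_abs_sub_le_of_hasDerivAt_pow_mul (n := n) (A := fun t => Aρ (γ t))
    (B := fun t => Az (γ t)) hc
    (fun t ht => hξρ _ _ (hbox t ht).1 _ (hρbox t ht) ▸ (hγ t ht).snd_snd)
    (fun t ht => hξz _ _ (hbox t ht).1 _ (hρbox t ht) ▸ (hγ t ht).snd_fst)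
    (fun t ht => (hbox t ht).2.1) hAρle
    (fun t ht => hM (γ t).1 (γ t).2 ⟨(hbox t ht).1, hρbox t ht⟩) hρ0 t ht
  exact ⟨key.2.trans_lt hδε, (hbox t ht).2.1, key.1⟩

/-- **Trapping boxes in the dicritical case** (Lemma 4.2(3)): if on
`R = ℝ × [α,β] × [0,δ₀]` one has `ξ_θ ≡ 1`, `ξ_ρ = ρⁿ·A_ρ` and `ξ_z = ρ^{n+1}·Ã_z`,
with `A_ρ(θ,z,0) = a(z) < 0` on `[α,β]`, then trajectories starting in the middle of the
box with small `ρ` stay in the box: `|z(t) − z(0)| < ε/2` and `ρ(t) ≤ ρ(0)`. -/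
theorem trapping_boxes_dicritical
    (n : ℕ) (δ₀ : ℝ) (hδ₀ : 0 < δ₀) (α β : ℝ) (hαβ : α < β)
    (ξ : ℝ × ℝ × ℝ → ℝ × ℝ × ℝ) (hξ : Continuous ξ)
    (hper : ∀ θ z ρ : ℝ, ξ (θ + 2 * π, z, ρ) = ξ (θ, z, ρ))
    (Aρ Az : ℝ × ℝ × ℝ → ℝ) (hAρ : Continuous Aρ) (hAz : Continuous Az)
    (hAρper : ∀ θ z ρ : ℝ, Aρ (θ + 2 * π, z, ρ) = Aρ (θ, z, ρ))
    (hAzper : ∀ θ z ρ : ℝ, Az (θ + 2 * π, z, ρ) = Az (θ, z, ρ))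
    (a : ℝ → ℝ) (hAρ0 : ∀ θ z : ℝ, Aρ (θ, z, 0) = a z)
    (haneg : ∀ z ∈ Set.Icc α β, a z < 0)
    (hξθ : ∀ θ : ℝ, ∀ z ∈ Set.Icc α β, ∀ ρ ∈ Set.Icc (0 : ℝ) δ₀, (ξ (θ, z, ρ)).1 = 1)
    (hξρ : ∀ θ : ℝ, ∀ z ∈ Set.Icc α β, ∀ ρ ∈ Set.Icc (0 : ℝ) δ₀,
      (ξ (θ, z, ρ)).2.2 = ρ ^ n * Aρ (θ, z, ρ))
    (hξz : ∀ θ : ℝ, ∀ z ∈ Set.Icc α β, ∀ ρ ∈ Set.Icc (0 : ℝ) δ₀,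
      (ξ (θ, z, ρ)).2.1 = ρ ^ (n + 1) * Az (θ, z, ρ)) :
    ∀ ε > 0, α + ε < β - ε →
      ∃ δ, 0 < δ ∧ δ ≤ δ₀ ∧
        ∀ (γ : ℝ → ℝ × ℝ × ℝ) (T : ℝ), 0 ≤ T →
          (∀ t ∈ Set.Icc 0 T, HasDerivAt γ (ξ (γ t)) t) →
          (∀ t ∈ Set.Icc 0 T, (γ t).2.1 ∈ Set.Icc α β ∧ (γ t).2.2 ∈ Set.Ioc 0 δ₀) →
          (γ 0).2.1 ∈ Set.Icc (α + ε) (β - ε) → 0 < (γ 0).2.2 → (γ 0).2.2 ≤ δ →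
          ∀ t ∈ Set.Icc 0 T,
            |(γ t).2.1 - (γ 0).2.1| < ε / 2 ∧ 0 < (γ t).2.2 ∧ (γ t).2.2 ≤ (γ 0).2.2 :=
  trapping_boxes_dicritical_general n δ₀ hδ₀ α β ξ Aρ Az hAρ hAz hAρper hAzper a hAρ0 haneg hξρ hξz
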